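/- For any convex body H in the plane and any point P on its boundary with adjacent boundary points forming triangles with a perturbed point P' where |PP'| ≤ δ and the diameter of H is at most D, replacing P by P' changes the convex hull area by at most D·δ/2. -/

import Mathlib

/-!
Let `K` be the hull of `S ∪ {P, P'}`. It contains both hulls, so by symmetry it suffices to show
`area K ≤ area (hull (S ∪ {P})) + D δ / 2`. Rotate the plane so that `P' = P + (0, c)` with
`c = |PP'|`, and let `[m, M]` be the projection of `H = hull (S ∪ {P})` to the first axis, so
`M - m ≤ D`. A point of `K` is `q + (0, t c)` with `q = (1 - t) y + t P`, `y ∈ H`; since the abscissa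
`s` of `q` is a `t`-weighted average of a point of `[m, M]` and `p = P.1`, `t` is at most the hat
function on `[m, M]` with peak `1` at `p`, evaluated at `s`. So each vertical slice of `K` is the
slice of `H` extended upwards by at most `c · tent s`, and Cavalieri's principle gives
`area K ≤ area H + c ∫ tent = area H + c (M - m) / 2`.
-/

open MeasureTheory Metric Set
open scoped Pointwise

theorem IsCompact.convexJoin {E : Type*} [AddCommGroup E] [Module ℝ E] [TopologicalSpace E]
    [IsTopologicalAddGroup E] [ContinuousSMul ℝ E] {s t : Set E} (hs : IsCompact s)
    (ht : IsCompact t) : IsCompact (convexJoin ℝ s t) := by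
  have : _root_.convexJoin ℝ s t =
      (fun q : E × E × ℝ => AffineMap.lineMap q.1 q.2.1 q.2.2) '' (s ×ˢ t ×ˢ Icc 0 1) := by
    ext z
    simp only [mem_convexJoin, segment_eq_image_lineMap, mem_image, mem_prod]
    aesop
  rw [this]
  exact (hs.prod (ht.prod isCompact_Icc)).image (by fun_prop)

theorem Convex.preimage_prodMk {𝕜 E F : Type*} [Semiring 𝕜] [PartialOrder 𝕜] [AddCommMonoid E]
    [AddCommMonoid F] [Module 𝕜 E] [Module 𝕜 F] {H : Set (E × F)} (hH : Convex 𝕜 H) (s : E) :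
    Convex 𝕜 (Prod.mk s ⁻¹' H) := fun x hx y hy a b ha hb hab => by
  simpa [Convex.combo_self hab] using hH hx hy ha hb hab

theorem IsCompact.preimage_prodMk {X Y : Type*} [TopologicalSpace X] [TopologicalSpace Y]
    [T2Space X] [T2Space Y] {H : Set (X × Y)} (hH : IsCompact H) (s : X) :
    IsCompact (Prod.mk s ⁻¹' H) :=
  (hH.image continuous_snd).of_isClosed_subset (hH.isClosed.preimage (by fun_prop))
    fun x hx => ⟨(s, x), hx, rfl⟩

theorem Real.volume_le_volume_add_of_subset_add_Icc {X Y : Set ℝ} (hX : IsCompact X)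
    (hXc : Convex ℝ X) {r : ℝ} (hY : Y ⊆ X + Icc 0 r) :
    volume Y ≤ volume X + ENNReal.ofReal r := by
  rcases X.eq_empty_or_nonempty with rfl | hne
  · simp_all
  have hIcc := eq_Icc_of_connected_compact ⟨hne, hXc.isPreconnected⟩ hX
  set a := sInf X
  set b := sSup X
  calc volume Y ≤ volume (Icc (a + 0) (b + r)) := by
        grw [hY, hIcc, Icc_add_Icc_subset]
    _ = ENNReal.ofReal ((b - a) + r) := by rw [Real.volume_Icc]; ring_nf
    _ ≤ volume X + ENNReal.ofReal r := by
        rw [hIcc, Real.volume_Icc]; exact ENNReal.ofReal_add_le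

/-- When `p = m` the division by zero makes `tent` vanish at `m` instead of equalling `1` there,
which is why `le_tent` excludes the (null) point `m`. -/
noncomputable def tent (m p M s : ℝ) : ℝ :=
  if s ≤ p then (s - m) / (p - m) else (M - s) / (M - p)

section Tent

variable {m p M : ℝ}

theorem tent_nonneg {s : ℝ} (hs : s ∈ Icc m M) : 0 ≤ tent m p M s := by
  unfold tent
  split_ifs
  · exact div_nonneg (by linarith [hs.1]) (by linarith [hs.1])
  · exact div_nonneg (by linarith [hs.2]) (by linarith [hs.2])

theorem le_tent {y t : ℝ} (hy : y ∈ Icc m M) (hp : p ∈ Icc m M) (ht : t ∈ Icc 0 1)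
    (hm : (1 - t) * y + t * p ≠ m) : t ≤ tent m p M ((1 - t) * y + t * p) := by
  obtain ⟨hy₁, hy₂⟩ := hy
  obtain ⟨ht₀, ht₁⟩ := ht
  obtain ⟨hp₁, hp₂⟩ := hp
  unfold tent
  split_ifs with h
  · have : m < p := by
      have : m ≤ (1 - t) * y + t * p := by nlinarith
      exact lt_of_lt_of_le (lt_of_le_of_ne this (Ne.symm hm)) h
    rw [le_div_iff₀ (by linarith)]; nlinarith
  · have : p < M := by nlinarith
    rw [le_div_iff₀ (by linarith)]; nlinarith

theorem tent_eqOn_uIoc_left (hmp : m ≤ p) :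
    EqOn (tent m p M) (fun s => (s - m) / (p - m)) (uIoc m p) := fun s hs => by
  rw [uIoc_of_le hmp] at hs; simp [tent, hs.2]

theorem tent_eqOn_uIoc_right (hpM : p ≤ M) :
    EqOn (tent m p M) (fun s => (M - s) / (M - p)) (uIoc p M) := fun s hs => by
  rw [uIoc_of_le hpM] at hs; simp [tent, not_le.2 hs.1]

theorem intervalIntegrable_tent_left (hmp : m ≤ p) :
    IntervalIntegrable (tent m p M) volume m p :=
  ((by fun_prop : Continuous fun s : ℝ => (s - m) / (p - m)).intervalIntegrable _ _).congr
    (tent_eqOn_uIoc_left hmp).symm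

theorem intervalIntegrable_tent_right (hpM : p ≤ M) :
    IntervalIntegrable (tent m p M) volume p M :=
  ((by fun_prop : Continuous fun s : ℝ => (M - s) / (M - p)).intervalIntegrable _ _).congr
    (tent_eqOn_uIoc_right hpM).symm

theorem integral_tent (hp : p ∈ Icc m M) : ∫ s in m..M, tent m p M s = (M - m) / 2 := by
  have half : ∀ x : ℝ, x ^ 2 / 2 / x = x / 2 := fun x => by
    rcases eq_or_ne x 0 with rfl | hx
    · simp
    · field_simp
  rw [← intervalIntegral.integral_add_adjacent_intervals (intervalIntegrable_tent_left hp.1)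
      (intervalIntegrable_tent_right hp.2),
    intervalIntegral.integral_congr_ae (ae_of_all _ (tent_eqOn_uIoc_left hp.1)),
    intervalIntegral.integral_congr_ae (ae_of_all _ (tent_eqOn_uIoc_right hp.2))]
  simp [intervalIntegral.integral_div, intervalIntegral.integral_comp_sub_right (fun x => x),
    intervalIntegral.integral_comp_sub_left (fun x => x), half]
  ring

theorem lintegral_ofReal_mul_tent {c : ℝ} (hc : 0 ≤ c) (hp : p ∈ Icc m M) :
    ∫⁻ s in Icc m M, ENNReal.ofReal (c * tent m p M s) = ENNReal.ofReal (c * (M - m) / 2) := by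
  have hint : IntervalIntegrable (tent m p M) volume m M :=
    (intervalIntegrable_tent_left hp.1).trans (intervalIntegrable_tent_right hp.2)
  rw [← ofReal_integral_eq_lintegral_ofReal, integral_Icc_eq_integral_Ioc,
    ← intervalIntegral.integral_of_le (hp.1.trans hp.2), intervalIntegral.integral_const_mul,
    integral_tent hp, mul_div_assoc]
  · exact ((intervalIntegrable_iff_integrableOn_Icc_of_le (hp.1.trans hp.2)).1 hint).const_mul c
  · exact ae_restrict_of_forall_mem measurableSet_Icc fun s hs => mul_nonneg hc (tent_nonneg hs)

end Tent

section Planar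

variable {H : Set (ℝ × ℝ)} {p : ℝ × ℝ} {c m M : ℝ}

theorem preimage_prodMk_convexHull_insert_subset (hHc : Convex ℝ H) (hp : p ∈ H) (hc : 0 ≤ c)
    (hmM : ∀ z ∈ H, z.1 ∈ Icc m M) {s : ℝ} (hs : s ≠ m) :
    Prod.mk s ⁻¹' convexHull ℝ (insert (p + (0, c)) H) ⊆
      Prod.mk s ⁻¹' H + Icc 0 (c * tent m p.1 M s) := by
  intro x hx
  rw [mem_preimage, convexHull_insert ⟨p, hp⟩, hHc.convexHull_eq, mem_convexJoin] at hx
  obtain ⟨_, rfl, y, hy, t, u, ht, hu, htu, hx⟩ := hx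
  obtain rfl : u = 1 - t := by linarith
  have hq : (1 - t) • y + t • p ∈ H := hHc hy hp (by linarith) ht (by ring)
  have hs_eq : s = (1 - t) * y.1 + t * p.1 := by
    have := congrArg Prod.fst hx
    simp only [smul_add, Prod.smul_mk, smul_eq_mul, mul_zero, Prod.fst_add, Prod.smul_fst,
      add_zero] at this
    linarith
  obtain rfl : x = (1 - t) * y.2 + t * p.2 + t * c := by
    have := congrArg Prod.snd hx
    simp only [smul_add, Prod.smul_mk, smul_eq_mul, mul_zero, Prod.snd_add, Prod.smul_snd] at this
    linarith
  refine ⟨_, ?_, t * c, ⟨by positivity, ?_⟩, rfl⟩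
  · rw [mem_preimage, hs_eq]; convert hq using 1; ext <;> simp
  · rw [mul_comm]
    exact mul_le_mul_of_nonneg_left
      (hs_eq ▸ le_tent (hmM y hy) (hmM p hp) ⟨ht, by linarith⟩ (hs_eq ▸ hs)) hc

theorem volume_convexHull_insert_add_le (hH : IsCompact H) (hHc : Convex ℝ H) (hp : p ∈ H)
    (hc : 0 ≤ c) (hmM : ∀ z ∈ H, z.1 ∈ Icc m M) :
    volume (convexHull ℝ (insert (p + (0, c)) H)) ≤
      volume H + ENNReal.ofReal (c * (M - m) / 2) := by
  set K := convexHull ℝ (insert (p + (0, c)) H)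
  have hK : IsCompact K := by
    rw [show K = _ from convexHull_insert ⟨p, hp⟩, hHc.convexHull_eq]
    exact isCompact_singleton.convexJoin hH
  have hK_slab : K ⊆ Prod.fst ⁻¹' Icc m M :=
    convexHull_min (insert_subset (by simpa using hmM p hp) hmM)
      ((convex_Icc m M).linear_preimage (LinearMap.fst ℝ ℝ ℝ))
  have slice_le : ∀ s ≠ m, volume (Prod.mk s ⁻¹' K) ≤ volume (Prod.mk s ⁻¹' H) +
      (Icc m M).indicator (fun s => ENNReal.ofReal (c * tent m p.1 M s)) s := by
    intro s hs
    by_cases hsI : s ∈ Icc m M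
    · rw [indicator_of_mem hsI]
      exact Real.volume_le_volume_add_of_subset_add_Icc (hH.preimage_prodMk s)
        (hHc.preimage_prodMk s) (preimage_prodMk_convexHull_insert_subset hHc hp hc hmM hs)
    · have : Prod.mk s ⁻¹' K = ∅ := eq_empty_of_forall_notMem fun x hx => hsI (hK_slab hx)
      simp [this]
  calc volume K = ∫⁻ s, volume (Prod.mk s ⁻¹' K) := by
        rw [Measure.volume_eq_prod, Measure.prod_apply hK.measurableSet]
    _ ≤ ∫⁻ s, volume (Prod.mk s ⁻¹' H) +
          (Icc m M).indicator (fun s => ENNReal.ofReal (c * tent m p.1 M s)) s :=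
        lintegral_mono_ae ((Measure.ae_ne volume m).mono slice_le)
    _ = volume H + ENNReal.ofReal (c * (M - m) / 2) := by
        rw [lintegral_add_left (measurable_measure_prodMk_left hH.measurableSet),
          lintegral_indicator measurableSet_Icc, lintegral_ofReal_mul_tent hc (hmM p hp),
          Measure.volume_eq_prod, Measure.prod_apply hH.measurableSet]

end Planar

theorem exists_measurePreserving_linearEquiv_prod (u : EuclideanSpace ℝ (Fin 2)) :
    ∃ Ψ : EuclideanSpace ℝ (Fin 2) ≃ₗ[ℝ] ℝ × ℝ,
      MeasurePreserving Ψ ∧ Ψ u = (0, ‖u‖) ∧ ∀ x, |(Ψ x).1| ≤ ‖x‖ := by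
  let e : EuclideanSpace ℝ (Fin 2) := EuclideanSpace.single 1 ‖u‖
  have he : ‖u‖ = ‖e‖ := by simp [e]
  let L := Submodule.reflection (ℝ ∙ (u - e))ᗮ
  refine ⟨L.toLinearEquiv ≪≫ₗ (EuclideanSpace.equiv (Fin 2) ℝ).toLinearEquiv ≪≫ₗ
    LinearEquiv.finTwoArrow ℝ ℝ, ?_, ?_, fun x => ?_⟩
  · exact (volume_preserving_finTwoArrow ℝ).comp
      ((PiLp.volume_preserving_ofLp _).comp L.measurePreserving)
  · simp [L, Submodule.reflection_sub he, e]
  · simpa [← Real.norm_eq_abs, L] using PiLp.norm_apply_le (L x) 0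

theorem EuclideanSpace.volume_convexHull_insert_le {H : Set (EuclideanSpace ℝ (Fin 2))}
    (hH : IsCompact H) (hHc : Convex ℝ H) {P : EuclideanSpace ℝ (Fin 2)} (hP : P ∈ H)
    (P' : EuclideanSpace ℝ (Fin 2)) :
    volume (convexHull ℝ (insert P' H)) ≤ volume H + ENNReal.ofReal (dist P P' * diam H / 2) := by
  obtain ⟨Ψ, hΨ, hΨu, hΨ_fst⟩ := exists_measurePreserving_linearEquiv_prod (P' - P)
  have hΨc : Continuous Ψ := LinearMap.continuous_of_finiteDimensional Ψ.toLinearMap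
  have volume_image : ∀ A, volume (Ψ '' A) = volume A := fun A => by
    rw [← hΨ.measure_preimage_emb Ψ.toContinuousLinearEquiv.toHomeomorph.measurableEmbedding,
      Ψ.injective.preimage_image]
  have hΨP' : Ψ P' = Ψ P + (0, dist P P') := by
    rw [dist_comm, dist_eq_norm, ← hΨu, ← map_add, add_sub_cancel]
  set f := fun x => (Ψ x).1
  obtain ⟨a, ha, ha_min⟩ := hH.exists_isMinOn ⟨P, hP⟩ (by fun_prop : Continuous f).continuousOn
  obtain ⟨b, hb, hb_max⟩ := hH.exists_isMaxOn ⟨P, hP⟩ (by fun_prop : Continuous f).continuousOn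
  have width : f b - f a ≤ diam H :=
    calc f b - f a = (Ψ (b - a)).1 := by simp [f]
      _ ≤ ‖b - a‖ := (le_abs_self _).trans (hΨ_fst _)
      _ ≤ diam H := by rw [← dist_eq_norm]; exact dist_le_diam_of_mem hH.isBounded hb ha
  calc volume (convexHull ℝ (insert P' H)) = volume (Ψ '' convexHull ℝ (insert P' H)) :=
        (volume_image _).symm
    _ = volume (convexHull ℝ (insert (Ψ P + (0, dist P P')) (Ψ '' H))) := by
        rw [← hΨP', ← image_insert_eq]; exact congrArg volume (Ψ.toLinearMap.image_convexHull _)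
    _ ≤ volume (Ψ '' H) + ENNReal.ofReal (dist P P' * (f b - f a) / 2) :=
        volume_convexHull_insert_add_le (hH.image hΨc) (hHc.linear_image Ψ.toLinearMap)
          (mem_image_of_mem _ hP) dist_nonneg
          (by rintro _ ⟨x, hx, rfl⟩; exact ⟨ha_min hx, hb_max hx⟩)
    _ ≤ volume H + ENNReal.ofReal (dist P P' * diam H / 2) := by
        rw [volume_image]; gcongr

theorem EuclideanSpace.volume_convexHull_union_pair_le {S : Set (EuclideanSpace ℝ (Fin 2))}
    (hS : S.Finite) (P P' : EuclideanSpace ℝ (Fin 2)) :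
    volume (convexHull ℝ (S ∪ {P, P'})) ≤
      volume (convexHull ℝ (S ∪ {P})) + ENNReal.ofReal (dist P P' * diam (S ∪ {P, P'}) / 2) := by
  have hne : (S ∪ {P}).Nonempty := ⟨P, by simp⟩
  have hK : S ∪ {P, P'} = insert P' (S ∪ {P}) := by ext; simp; tauto
  have hdiam : diam (convexHull ℝ (S ∪ {P})) ≤ diam (S ∪ {P, P'}) := by
    rw [convexHull_diam]
    exact diam_mono (by simp [hK]) (hS.union (by simp)).isBounded
  calc volume (convexHull ℝ (S ∪ {P, P'}))
      = volume (convexHull ℝ (insert P' (convexHull ℝ (S ∪ {P})))) := by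
        rw [hK, convexHull_insert hne, convexHull_insert hne.convexHull,
          (convex_convexHull ℝ _).convexHull_eq]
    _ ≤ _ := volume_convexHull_insert_le ((hS.union (by simp)).isCompact_convexHull ℝ)
        (convex_convexHull ℝ _) (subset_convexHull ℝ _ (by simp : P ∈ S ∪ {P})) P'
    _ ≤ _ := by gcongr

theorem ENNReal.abs_toReal_sub_le_of_le_add {a b k : ENNReal} {r : ℝ} (hr : 0 ≤ r) (hk : k ≠ ⊤)
    (ha : a ≤ k) (hb : b ≤ k) (hka : k ≤ a + ENNReal.ofReal r)
    (hkb : k ≤ b + ENNReal.ofReal r) : |a.toReal - b.toReal| ≤ r := by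
  have hab := toReal_le_add (hb.trans hka) (ne_top_of_le_ne_top hk ha) ofReal_ne_top
  have hba := toReal_le_add (ha.trans hkb) (ne_top_of_le_ne_top hk hb) ofReal_ne_top
  rw [toReal_ofReal hr] at hab hba
  exact abs_sub_le_iff.2 ⟨by linarith, by linarith⟩

/-- If `H` is the convex hull of a finite set `S ∪ {P}` of diameter at most `D`
(together with `P'`), and `P` is replaced by `P'` with `|P P'| ≤ δ`, the convex hull
area changes by at most `(1/2)·D·δ`. -/
theorem stmt_15 (S : Set (EuclideanSpace ℝ (Fin 2))) (hS : S.Finite)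
    (P P' : EuclideanSpace ℝ (Fin 2)) (D δ : ℝ)
    (hD : Metric.diam (S ∪ {P, P'}) ≤ D) (hδ : dist P P' ≤ δ) :
    |(volume (convexHull ℝ (S ∪ {P}))).toReal -
      (volume (convexHull ℝ (S ∪ {P'}))).toReal| ≤ (1 / 2) * D * δ := by
  have hD₀ : 0 ≤ D := diam_nonneg.trans hD
  have hδ₀ : 0 ≤ δ := dist_nonneg.trans hδ
  have hbound : ENNReal.ofReal (dist P P' * diam (S ∪ {P, P'}) / 2) ≤
      ENNReal.ofReal (1 / 2 * D * δ) := by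
    rw [show 1 / 2 * D * δ = δ * D / 2 by ring]; gcongr
  have hK := EuclideanSpace.volume_convexHull_union_pair_le hS P P'
  have hK' := EuclideanSpace.volume_convexHull_union_pair_le hS P' P
  rw [pair_comm, dist_comm] at hK'
  exact ENNReal.abs_toReal_sub_le_of_le_add (by positivity)
    ((hS.union (by simp)).isCompact_convexHull ℝ).measure_lt_top.ne
    (measure_mono (convexHull_mono (union_subset_union_right S (by simp))))
    (measure_mono (convexHull_mono (union_subset_union_right S (by simp))))
    (hK.trans (add_le_add le_rfl hbound)) (hK'.trans (add_le_add le_rfl hbound))
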